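/- arXiv:1012.2274 — 7 statements merged into one kernel-verified Lean document; each statement's English description precedes it below -/
import Mathlib

section
/- Let G be a multiplicative abelian group and φ an antisymmetric tricharacter on G. Then for all ω, ξ, η, ζ ∈ G one has φ(ωξ, η, ζ) · φ(ω, η, ζ)⁻¹ · φ(ξ, ω⁻¹η, ω⁻¹ζ)⁻¹ = φ(ξ, ω, ζ) · φ(ξ, η, ω), and moreover this common value equals φ(ω, ξ, η) · φ(ω, ξ, ζ)⁻¹. (Equivalently: the maps γ_ξ on twisted kernels satisfy γ_ω ∘ γ_ξ = ad(u(ω,ξ)) ∘ γ_{ωξ}, where u(ω,ξ) is pointwise multiplication by φ(ω,ξ,·).) -/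
/-- An antisymmetric tricharacter on a multiplicative abelian group `G`: a map
`φ : G → G → G → ℂˣ` multiplicative in each variable, trivial when two arguments
coincide, and inverted under swapping any two arguments. -/
structure IsAntisymTrichar {G : Type*} [CommGroup G] (φ : G → G → G → ℂˣ) : Prop where
  mul_left : ∀ x x' y z, φ (x * x') y z = φ x y z * φ x' y z
  mul_mid : ∀ x y y' z, φ x (y * y') z = φ x y z * φ x y' z
  mul_right : ∀ x y z z', φ x y (z * z') = φ x y z * φ x y z'
  diag₁₂ : ∀ x z, φ x x z = 1
  diag₁₃ : ∀ x y, φ x y x = 1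
  diag₂₃ : ∀ x y, φ x y y = 1
  swap₁₂ : ∀ x y z, φ y x z = (φ x y z)⁻¹
  swap₂₃ : ∀ x y z, φ x z y = (φ x y z)⁻¹
  swap₁₃ : ∀ x y z, φ z y x = (φ x y z)⁻¹

namespace IsAntisymTrichar

variable {G : Type*} [CommGroup G] {φ : G → G → G → ℂˣ}

def midHom (hφ : IsAntisymTrichar φ) (x z : G) : G →* ℂˣ :=
  MonoidHom.mk' (fun y => φ x y z) fun y y' => hφ.mul_mid x y y' z

def rightHom (hφ : IsAntisymTrichar φ) (x y : G) : G →* ℂˣ :=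
  MonoidHom.mk' (φ x y) (hφ.mul_right x y)

theorem inv_mid (hφ : IsAntisymTrichar φ) (x y z : G) : φ x y⁻¹ z = (φ x y z)⁻¹ :=
  map_inv (hφ.midHom x z) y

theorem inv_right (hφ : IsAntisymTrichar φ) (x y z : G) : φ x y z⁻¹ = (φ x y z)⁻¹ :=
  map_inv (hφ.rightHom x y) z

/-- Translating the last two arguments by `ω⁻¹` costs only the factors involving `ω`,
since the term `φ ξ ω⁻¹ ω⁻¹` vanishes. -/
theorem inv_mul_mid_right (hφ : IsAntisymTrichar φ) (ξ ω η ζ : G) :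
    φ ξ (ω⁻¹ * η) (ω⁻¹ * ζ) = (φ ξ ω ζ)⁻¹ * (φ ξ η ω)⁻¹ * φ ξ η ζ := by
  rw [hφ.mul_mid, hφ.mul_right, hφ.mul_right, hφ.diag₂₃, hφ.inv_mid, hφ.inv_right]
  group

end IsAntisymTrichar

/-- The twisted-kernel maps `γ_ξ` compose via the multiplier `u(ω,ξ) = φ(ω,ξ,·)`:
the cocycle `φ(ωξ,η,ζ) φ(ω,η,ζ)⁻¹ φ(ξ,ω⁻¹η,ω⁻¹ζ)⁻¹` equals `φ(ξ,ω,ζ) φ(ξ,η,ω)`,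
which in turn equals `φ(ω,ξ,η) φ(ω,ξ,ζ)⁻¹`. -/
theorem gamma_composition_cocycle {G : Type*} [CommGroup G] (φ : G → G → G → ℂˣ)
    (hφ : IsAntisymTrichar φ) :
    ∀ ω ξ η ζ : G,
      φ (ω * ξ) η ζ * (φ ω η ζ)⁻¹ * (φ ξ (ω⁻¹ * η) (ω⁻¹ * ζ))⁻¹ = φ ξ ω ζ * φ ξ η ω ∧
      φ ξ ω ζ * φ ξ η ω = φ ω ξ η * (φ ω ξ ζ)⁻¹ := by
  intro ω ξ η ζ
  constructor
  · rw [hφ.mul_left, hφ.inv_mul_mid_right, mul_inv_cancel_comm, mul_inv_rev,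
      mul_inv_cancel_left, mul_inv, inv_inv, inv_inv]
  · rw [hφ.swap₁₂ ω ξ ζ, hφ.swap₁₃ ω η ξ, hφ.swap₂₃ ω ξ η, inv_inv, mul_comm]
end

section
/- Let G be a finite additive abelian group with dual group Ĝ = Hom(G, ℂˣ), let A be an associative ℂ-algebra, and let α : Ĝ → Aut_ℂ(A) be a group homomorphism to ℂ-algebra automorphisms. For a : G → A define â : Ĝ → A by â(ξ) = Σ_{x∈G} ξ(x) a(x), and on functions F, H : Ĝ → A define the crossed-product convolution (F ⋆ H)(ξ) = Σ_{η∈Ĝ} F(η) · α_η(H(ξ·η⁻¹)). For f : G → ℂ and b ∈ A define the module action f ▸ b = Σ_{z∈G} Σ_{η∈Ĝ} f(z) η(z) α_η(b). Then for all a, b : G → A, the product transported back to G-functions is pointwise: (â ⋆ b̂)(ξ) = Σ_{x∈G} ξ(x) (a_x ▸ b(x)) for all ξ ∈ Ĝ, where a_x(z) = a(z + x). -/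
variable {G : Type*} [AddCommGroup G] [Fintype G] [Fintype (AddChar G ℂˣ)]
  {A : Type*} [Ring A] [Algebra ℂ A]

/-- The Fourier transform `â(ξ) = Σ_{x∈G} ξ(x) a(x)` of an `A`-valued function on `G`. -/
noncomputable def fourierTransform (a : G → A) : AddChar G ℂˣ → A :=
  fun ξ => ∑ x : G, ((ξ x : ℂˣ) : ℂ) • a x

/-- The crossed-product convolution `(F ⋆ H)(ξ) = Σ_η F(η) · α_η(H(ξη⁻¹))` on
`A`-valued functions on the dual group `Ĝ`. -/
noncomputable def crossedMul (α : AddChar G ℂˣ →* (A ≃ₐ[ℂ] A))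
    (F H : AddChar G ℂˣ → A) : AddChar G ℂˣ → A :=
  fun ξ => ∑ η : AddChar G ℂˣ, F η * α η (H (ξ * η⁻¹))

/-- The module action of an `A ⊗ C(G)`-element `g : G → A` on `b ∈ A`, combining the
multiplication in `A` with the `C(G)`-action `f ▸ b = Σ_z Σ_η f(z) η(z) α_η(b)`. -/
noncomputable def moduleAct (α : AddChar G ℂˣ →* (A ≃ₐ[ℂ] A)) (g : G → A) (b : A) : A :=
  ∑ z : G, ∑ η : AddChar G ℂˣ, g z * (((η z : ℂˣ) : ℂ) • α η b)

/-!
Translation in `G` becomes multiplication by a character on the Fourier side: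
the transform of `a_x = a(· + x)` at `η` is `η(x)⁻¹ â(η)`. Expanding `b̂(ξη⁻¹)` in the
convolution produces exactly the factors `ξ(x) η(x)⁻¹`, while the module action is
`g ▸ b = Σ_η ĝ(η) α_η(b)`, so both sides agree term by term in `x` and `η`.
-/

omit [Fintype (AddChar G ℂˣ)] in
theorem fourierTransform_comp_add_right (a : G → A) (x : G) (η : AddChar G ℂˣ) :
    fourierTransform (fun z => a (z + x)) η = ((η x)⁻¹ : ℂˣ) • fourierTransform a η := by
  rw [fourierTransform, fourierTransform, Finset.smul_sum]
  refine Fintype.sum_equiv (Equiv.addRight x) _ _ fun z => ?_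
  rw [Equiv.coe_addRight, Units.smul_def, smul_smul, AddChar.map_add_eq_mul, ← Units.val_mul,
    ← mul_assoc, inv_mul_cancel_comm]

theorem moduleAct_eq_sum_fourierTransform (α : AddChar G ℂˣ →* (A ≃ₐ[ℂ] A)) (g : G → A)
    (b : A) : moduleAct α g b = ∑ η : AddChar G ℂˣ, fourierTransform g η * α η b := by
  simp only [moduleAct, fourierTransform, Finset.sum_mul, mul_smul_comm, smul_mul_assoc]
  exact Finset.sum_comm

theorem crossedMul_fourierTransform_right (α : AddChar G ℂˣ →* (A ≃ₐ[ℂ] A))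
    (F : AddChar G ℂˣ → A) (b : G → A) (ξ : AddChar G ℂˣ) :
    crossedMul α F (fourierTransform b) ξ
      = ∑ x : G, ((ξ x : ℂˣ) : ℂ) • ∑ η : AddChar G ℂˣ, ((η x)⁻¹ • F η) * α η (b x) := by
  simp only [crossedMul, fourierTransform, map_sum, Finset.mul_sum, Finset.smul_sum]
  rw [Finset.sum_comm]
  refine Fintype.sum_congr _ _ fun x => Fintype.sum_congr _ _ fun η => ?_
  rw [AddChar.mul_apply, AddChar.inv_apply', map_smul, mul_smul_comm, smul_mul_assoc,
    Units.smul_def, smul_smul, Units.val_mul, mul_comm]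

/-- In the Fourier picture the crossed-product multiplication is pointwise:
`(â ⋆ b̂)(ξ) = Σ_x ξ(x) (a_x ▸ b(x))`, where `a_x(z) = a(z + x)`. -/
theorem crossedMul_fourier_pointwise (α : AddChar G ℂˣ →* (A ≃ₐ[ℂ] A))
    (a b : G → A) (ξ : AddChar G ℂˣ) :
    crossedMul α (fourierTransform a) (fourierTransform b) ξ
      = ∑ x : G, ((ξ x : ℂˣ) : ℂ) • moduleAct α (fun z => a (z + x)) (b x) := by
  simp only [crossedMul_fourierTransform_right, moduleAct_eq_sum_fourierTransform,
    fourierTransform_comp_add_right]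
end

section
/- Let G be a finite additive abelian group, B an associative unital ℂ-algebra, φ and ψ antisymmetric tricharacters on G, β : G → Aut_ℂ(B) a map to algebra automorphisms, and u : G × G → Bˣ such that for all x, y, z ∈ G and b ∈ B: (i) β_x(β_y(b)) = u(x,y) · β_{x+y}(b) · u(x,y)⁻¹, and (ii) φ(x,y,z) · u(x,y) · u(x+y,z) = β_x(u(y,z)) · u(x,y+z). For a, b : G × G → B define the (ψφ)-modified crossed product multiplication (a ⋆ b)(s,x) = Σ_{t∈G} ψ(t, s−t, x) φ(t, s−t, x) · a(t, s−t+x) · β_t(b(s−t, x)) · u(t, s−t), and define the transform ã(w,z) = β_w⁻¹( a(w−z, z) · u(w−z, z) ). Then for all a, b : G × G → B and all w, z ∈ G: (a ⋆ b)~(w,z) = Σ_{v∈G} ψ(w, v, z) · ã(w,v) · b̃(v,z); that is, the transform carries the modified crossed product multiplication to the ψ-twisted multiplication of B-valued kernels. -/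
/-- An antisymmetric tricharacter on an additive abelian group `G`: a map
`φ : G → G → G → ℂˣ` multiplicative in each variable, trivial when two arguments
coincide, and inverted under swapping any two arguments. -/
structure IsAddAntisymTrichar {G : Type*} [AddCommGroup G] (φ : G → G → G → ℂˣ) : Prop where
  mul_left : ∀ x x' y z, φ (x + x') y z = φ x y z * φ x' y z
  mul_mid : ∀ x y y' z, φ x (y + y') z = φ x y z * φ x y' z
  mul_right : ∀ x y z z', φ x y (z + z') = φ x y z * φ x y z'
  diag₁₂ : ∀ x z, φ x x z = 1
  diag₁₃ : ∀ x y, φ x y x = 1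
  diag₂₃ : ∀ x y, φ x y y = 1
  swap₁₂ : ∀ x y z, φ y x z = (φ x y z)⁻¹
  swap₂₃ : ∀ x y z, φ x z y = (φ x y z)⁻¹
  swap₁₃ : ∀ x y z, φ z y x = (φ x y z)⁻¹

variable {G : Type*} [AddCommGroup G] [Fintype G] {B : Type*} [Ring B] [Algebra ℂ B]

/-- The `(ψφ)`-modified crossed product multiplication on `B`-valued functions on `G × G`:
`(a ⋆ b)(s,x) = Σ_t ψ(t,s−t,x) φ(t,s−t,x) a(t,s−t+x) β_t(b(s−t,x)) u(t,s−t)`. -/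
noncomputable def modifiedCrossedMul (ψ φ : G → G → G → ℂˣ) (β : G → (B ≃ₐ[ℂ] B))
    (u : G → G → Bˣ) (a b : G → G → B) : G → G → B :=
  fun s x => ∑ t : G, (((ψ t (s - t) x : ℂˣ) : ℂ) * ((φ t (s - t) x : ℂˣ) : ℂ)) •
    (a t (s - t + x) * β t (b (s - t) x) * (u t (s - t) : B))

/-- The kernel transform `ã(w,z) = β_w⁻¹( a(w−z,z) u(w−z,z) )`. -/
noncomputable def kernelTransform (β : G → (B ≃ₐ[ℂ] B)) (u : G → G → Bˣ)
    (a : G → G → B) : G → G → B :=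
  fun w z => (β w).symm (a (w - z) z * (u (w - z) z : B))

/-!
Reindex the crossed-product sum by `v = w − t`, i.e. write `w = x + (y + z)` with `x = t`,
`v = y + z`. Termwise, the `ψ`-scalars agree because `ψ(x+y+z, y+z, z) = ψ(x,y,z)` for an
antisymmetric tricharacter; the associator `φ(x,y,z)` is absorbed by the cocycle identity (ii),
which turns `β_x(b) u(x,y) u(x+y,z)` into `β_x(b u(y,z)) u(x,y+z)`; finally (i) moves `β_x`
past `u(x,y+z)`, where it becomes `β_{x+y+z} ∘ β_{y+z}⁻¹`, which is exactly the product of the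
two transforms.
-/

theorem IsAddAntisymTrichar.apply_add_add_add {G : Type*} [AddCommGroup G]
    {ψ : G → G → G → ℂˣ} (hψ : IsAddAntisymTrichar ψ) (x y z : G) :
    ψ (x + (y + z)) (y + z) z = ψ x y z := by
  simp only [hψ.mul_left, hψ.mul_mid, hψ.diag₁₂, hψ.diag₁₃, hψ.diag₂₃, mul_one]

section TwistedAction

variable {M R A : Type*} [Add M] [CommSemiring R] [Semiring A] [Algebra R A]
  {β : M → A ≃ₐ[R] A} {u : M → M → Aˣ}

theorem twistedAction_apply_mul_cocycle
    (hβu : ∀ (x y : M) (b : A), β x (β y b) = (u x y : A) * β (x + y) b * ((u x y)⁻¹ : Aˣ))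
    (x y : M) (b : A) :
    β x b * u x y = u x y * β (x + y) ((β y).symm b) := by
  have h := hβu x y ((β y).symm b)
  rw [AlgEquiv.apply_symm_apply] at h
  rw [h, Units.inv_mul_cancel_right]

theorem twistedAction_smul_mul_cocycle_mul_cocycle {φ : M → M → M → Rˣ}
    (hβu : ∀ (x y : M) (b : A), β x (β y b) = (u x y : A) * β (x + y) b * ((u x y)⁻¹ : Aˣ))
    (hu : ∀ x y z : M, ((φ x y z : Rˣ) : R) • ((u x y : A) * (u (x + y) z : A))
      = β x (u y z) * (u x (y + z) : A))
    (x y z : M) (c d : A) :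
    ((φ x y z : Rˣ) : R) • (c * β x d * u x y * u (x + y) z)
      = c * u x (y + z) * β (x + (y + z)) ((β (y + z)).symm (d * u y z)) := by
  calc ((φ x y z : Rˣ) : R) • (c * β x d * u x y * u (x + y) z)
      = c * β x d * (((φ x y z : Rˣ) : R) • ((u x y : A) * u (x + y) z)) := by
        rw [mul_assoc (c * β x d), mul_smul_comm]
    _ = c * (β x (d * u y z) * u x (y + z)) := by
        rw [hu, map_mul, mul_assoc, mul_assoc]
    _ = c * u x (y + z) * β (x + (y + z)) ((β (y + z)).symm (d * u y z)) := by
        rw [twistedAction_apply_mul_cocycle hβu, mul_assoc]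

end TwistedAction

theorem kernelTransform_modifiedCrossedMul_general (ψ φ : G → G → G → ℂˣ)
    (hψ : IsAddAntisymTrichar ψ)
    (β : G → (B ≃ₐ[ℂ] B)) (u : G → G → Bˣ)
    (hβu : ∀ (x y : G) (b : B), β x (β y b) = (u x y : B) * β (x + y) b * ((u x y)⁻¹ : Bˣ))
    (hu : ∀ x y z : G, ((φ x y z : ℂˣ) : ℂ) • ((u x y : B) * (u (x + y) z : B))
      = β x (u y z) * (u x (y + z) : B))
    (a b : G → G → B) (w z : G) :
    kernelTransform β u (modifiedCrossedMul ψ φ β u a b) w z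
      = ∑ v : G, ((ψ w v z : ℂˣ) : ℂ) •
          (kernelTransform β u a w v * kernelTransform β u b v z) := by
  simp only [kernelTransform, modifiedCrossedMul, Finset.sum_mul, map_sum]
  refine Fintype.sum_equiv (Equiv.subLeft w) _ _ fun x => ?_
  obtain ⟨y, rfl⟩ : ∃ y, w = x + (y + z) := ⟨w - z - x, by abel⟩
  simp only [Equiv.subLeft_apply, show x + (y + z) - z = x + y by abel, add_sub_cancel_left,
    add_sub_cancel_right, hψ.apply_add_add_add]
  rw [← (β (x + (y + z))).symm_apply_apply ((β (y + z)).symm _), ← map_mul, ← map_smul,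
    smul_mul_assoc, mul_smul, ← twistedAction_smul_mul_cocycle_mul_cocycle hβu hu]

/-- Generalized Takai duality (algebraic core): for a Leptin–Busby–Smith twisted action
`(β, u)` with associator `φ`, the kernel transform carries the `(ψφ)`-modified crossed
product multiplication to the `ψ`-twisted multiplication of `B`-valued kernels. -/
theorem kernelTransform_modifiedCrossedMul (ψ φ : G → G → G → ℂˣ)
    (hψ : IsAddAntisymTrichar ψ) (hφ : IsAddAntisymTrichar φ)
    (β : G → (B ≃ₐ[ℂ] B)) (u : G → G → Bˣ)
    (hβu : ∀ (x y : G) (b : B), β x (β y b) = (u x y : B) * β (x + y) b * ((u x y)⁻¹ : Bˣ))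
    (hu : ∀ x y z : G, ((φ x y z : ℂˣ) : ℂ) • ((u x y : B) * (u (x + y) z : B))
      = β x (u y z) * (u x (y + z) : B))
    (a b : G → G → B) (w z : G) :
    kernelTransform β u (modifiedCrossedMul ψ φ β u a b) w z
      = ∑ v : G, ((ψ w v z : ℂˣ) : ℂ) •
          (kernelTransform β u a w v * kernelTransform β u b v z) :=
  kernelTransform_modifiedCrossedMul_general ψ φ hψ β u hβu hu a b w z
end

section
/- Let G be a finite additive abelian group, B an associative unital ℂ-algebra, φ an antisymmetric tricharacter on G, β : G → Aut_ℂ(B) a map to algebra automorphisms, and u : G × G → Bˣ such that for all x, y, z ∈ G and b ∈ B: (i) β_x(β_y(b)) = u(x,y) · β_{x+y}(b) · u(x,y)⁻¹, and (ii) φ(x,y,z) · u(x,y) · u(x+y,z) = β_x(u(y,z)) · u(x,y+z). For a, b : G × G → B define (a ⋆ b)(s,x) = Σ_{t∈G} φ(t, s−t, x) · a(t, s−t+x) · β_t(b(s−t, x)) · u(t, s−t). Then the transform a ↦ ã, where ã(w,z) = β_w⁻¹( a(w−z, z) · u(w−z, z) ), is a ℂ-linear bijection from functions G × G → B to itself satisfying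 (a ⋆ b)~(w,z) = Σ_{v∈G} ã(w,v) · b̃(v,z); hence the φ-modified crossed product is isomorphic as a ℂ-algebra to the algebra of B-valued G × G matrices with ordinary matrix multiplication. -/
variable {G : Type*} [AddCommGroup G] [Fintype G] {B : Type*} [Ring B] [Algebra ℂ B]

/-- The `φ`-modified crossed product multiplication on `B`-valued functions on `G × G`:
`(a ⋆ b)(s,x) = Σ_t φ(t,s−t,x) a(t,s−t+x) β_t(b(s−t,x)) u(t,s−t)`. -/
noncomputable def phiCrossedMul (φ : G → G → G → ℂˣ) (β : G → (B ≃ₐ[ℂ] B))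
    (u : G → G → Bˣ) (a b : G → G → B) : G → G → B :=
  fun s x => ∑ t : G, ((φ t (s - t) x : ℂˣ) : ℂ) •
    (a t (s - t + x) * β t (b (s - t) x) * (u t (s - t) : B))

/-! Write `w = x + (y + z)` and `v = y + z`. Condition (i) says that `β_w ∘ β_v⁻¹` is `β_x`
followed by conjugation with `u(x,v)⁻¹`, which turns `ã(w,v) b̃(v,z)` into
`β_w⁻¹(a(x,v) β_x(b(y,z)) β_x(u(y,z)) u(x,y+z))`. The twisted cocycle identity (ii) replaces
`β_x(u(y,z)) u(x,y+z)` by `φ(x,y,z) u(x,y) u(x+y,z)`, which gives the `x`-th term of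
`(a ⋆ b)(x+y,z) u(x+y,z)`; summing over `x`, i.e. over `v = w - x`, gives the matrix product. -/

section KernelTransform

variable {G : Type*} [AddCommGroup G] {B : Type*} [Ring B] [Algebra ℂ B]
  (β : G → (B ≃ₐ[ℂ] B)) (u : G → G → Bˣ)

@[simp]
theorem kernelTransform_add_apply (a : G → G → B) (x z : G) :
    kernelTransform β u a (x + z) z = (β (x + z)).symm (a x z * u x z) := by
  simp [kernelTransform]

noncomputable def kernelTransformEquiv : (G → G → B) ≃ₗ[ℂ] (G → G → B) where
  toFun := kernelTransform β u
  invFun a s x := β (s + x) (a (s + x) x) * ↑(u s x)⁻¹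
  map_add' a b := by ext w z; simp [kernelTransform, add_mul]
  map_smul' c a := by ext w z; simp [kernelTransform]
  left_inv a := by ext s x; simp [kernelTransform, mul_assoc]
  right_inv a := by ext w z; simp [kernelTransform, mul_assoc]

variable {β u}

theorem apply_add_symm_apply
    (hβu : ∀ (x y : G) (b : B), β x (β y b) = (u x y : B) * β (x + y) b * ((u x y)⁻¹ : Bˣ))
    (x y : G) (c : B) :
    β (x + y) ((β y).symm c) = ((u x y)⁻¹ : Bˣ) * β x c * u x y := by
  have h := hβu x y ((β y).symm c)
  rw [AlgEquiv.apply_symm_apply] at h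
  simp [h, mul_assoc]

theorem kernelTransform_mul_kernelTransform (φ : G → G → G → ℂˣ)
    (hβu : ∀ (x y : G) (b : B), β x (β y b) = (u x y : B) * β (x + y) b * ((u x y)⁻¹ : Bˣ))
    (hu : ∀ x y z : G, ((φ x y z : ℂˣ) : ℂ) • ((u x y : B) * (u (x + y) z : B))
      = β x (u y z) * (u x (y + z) : B))
    (a b : G → G → B) (x y z : G) :
    kernelTransform β u a (x + (y + z)) (y + z) * kernelTransform β u b (y + z) z
      = (β (x + (y + z))).symm
          (((φ x y z : ℂˣ) : ℂ) • (a x (y + z) * β x (b y z) * u x y) * u (x + y) z) := by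
  calc _ = (β (x + (y + z))).symm (a x (y + z) * u x (y + z) *
          β (x + (y + z)) ((β (y + z)).symm (b y z * u y z))) := by
        simp [map_mul]
    _ = (β (x + (y + z))).symm
          (a x (y + z) * β x (b y z) * (β x (u y z) * u x (y + z))) := by
        simp [apply_add_symm_apply hβu, mul_assoc]
    _ = _ := by
        rw [← hu]
        simp [mul_assoc]

end KernelTransform

theorem kernelTransform_phiCrossedMul_matrix_general (φ : G → G → G → ℂˣ)
    (β : G → (B ≃ₐ[ℂ] B)) (u : G → G → Bˣ)
    (hβu : ∀ (x y : G) (b : B), β x (β y b) = (u x y : B) * β (x + y) b * ((u x y)⁻¹ : Bˣ))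
    (hu : ∀ x y z : G, ((φ x y z : ℂˣ) : ℂ) • ((u x y : B) * (u (x + y) z : B))
      = β x (u y z) * (u x (y + z) : B)) :
    Function.Bijective (kernelTransform β u) ∧
    (∀ (a b : G → G → B), kernelTransform β u (a + b)
        = kernelTransform β u a + kernelTransform β u b) ∧
    (∀ (c : ℂ) (a : G → G → B), kernelTransform β u (c • a) = c • kernelTransform β u a) ∧
    (∀ (a b : G → G → B) (w z : G),
      kernelTransform β u (phiCrossedMul φ β u a b) w z
        = ∑ v : G, kernelTransform β u a w v * kernelTransform β u b v z) := by
  refine ⟨(kernelTransformEquiv β u).bijective, (kernelTransformEquiv β u).map_add,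
    (kernelTransformEquiv β u).map_smul, fun a b w z => ?_⟩
  obtain ⟨s, rfl⟩ : ∃ s, w = s + z := ⟨w - z, (sub_add_cancel w z).symm⟩
  rw [kernelTransform_add_apply, phiCrossedMul, Finset.sum_mul, map_sum]
  refine Fintype.sum_equiv ((Equiv.subLeft s).trans (Equiv.addRight z)) _ _ fun t => ?_
  obtain ⟨y, rfl⟩ : ∃ y, s = t + y := ⟨s - t, (add_sub_cancel t s).symm⟩
  simp only [Equiv.trans_apply, Equiv.subLeft_apply, Equiv.coe_addRight, add_sub_cancel_left]
  rw [add_assoc]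
  exact (kernelTransform_mul_kernelTransform φ hβu hu a b t y z).symm

/-- Strictification (the case `ψ ≡ 1` of generalized Takai duality): the kernel
transform is a ℂ-linear bijection carrying the `φ`-modified crossed product
multiplication to ordinary multiplication of `B`-valued `G × G` matrices; hence the
`φ`-modified crossed product is isomorphic to the `B`-valued matrix algebra. -/
theorem kernelTransform_phiCrossedMul_matrix (φ : G → G → G → ℂˣ)
    (hφ : IsAddAntisymTrichar φ)
    (β : G → (B ≃ₐ[ℂ] B)) (u : G → G → Bˣ)
    (hβu : ∀ (x y : G) (b : B), β x (β y b) = (u x y : B) * β (x + y) b * ((u x y)⁻¹ : Bˣ))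
    (hu : ∀ x y z : G, ((φ x y z : ℂˣ) : ℂ) • ((u x y : B) * (u (x + y) z : B))
      = β x (u y z) * (u x (y + z) : B)) :
    Function.Bijective (kernelTransform β u) ∧
    (∀ (a b : G → G → B), kernelTransform β u (a + b)
        = kernelTransform β u a + kernelTransform β u b) ∧
    (∀ (c : ℂ) (a : G → G → B), kernelTransform β u (c • a) = c • kernelTransform β u a) ∧
    (∀ (a b : G → G → B) (w z : G),
      kernelTransform β u (phiCrossedMul φ β u a b) w z
        = ∑ v : G, kernelTransform β u a w v * kernelTransform β u b v z) :=
  kernelTransform_phiCrossedMul_matrix_general φ β u hβu hu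
end

section
/- Let G be a finite additive abelian group with dual group Ĝ = Hom(G, ℂˣ), let A be a ℂ-module, and let α : G → GL_ℂ(A) be a group homomorphism. For F : G × Ĝ → A define the transform F̃(x,z) = Σ_{ξ∈Ĝ} ξ(z) · α_x⁻¹(F(x−z, ξ)), and for v ∈ G define the double-dual action (D_v F)(x,ξ) = ξ(v) · F(x,ξ). Then for all F, v, x, z: (D_v F)~(x,z) = α_v( F̃(x+v, z+v) ). That is, under the transform, the double dual action of G combines the original action α on A with the adjoint action of the right regular representation of G on kernels. -/
variable {G : Type*} [AddCommGroup G] [Fintype G] [Fintype (AddChar G ℂˣ)]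
  {A : Type*} [AddCommGroup A] [Module ℂ A]

/-- The transform `F̃(x,z) = Σ_{ξ∈Ĝ} ξ(z) α_x⁻¹(F(x−z, ξ))` taking `A`-valued functions
on `G × Ĝ` to `A`-valued kernels on `G × G`. -/
noncomputable def dualKernelTransform (α : G → (A ≃ₗ[ℂ] A))
    (F : G → AddChar G ℂˣ → A) : G → G → A :=
  fun x z => ∑ ξ : AddChar G ℂˣ, ((ξ z : ℂˣ) : ℂ) • (α x).symm (F (x - z) ξ)

/-- The double-dual action `(D_v F)(x,ξ) = ξ(v) F(x,ξ)` of `v ∈ G`. -/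
noncomputable def doubleDualAct (v : G) (F : G → AddChar G ℂˣ → A) :
    G → AddChar G ℂˣ → A :=
  fun x ξ => ((ξ v : ℂˣ) : ℂ) • F x ξ

/-
In the transform of `D_v F`, the factor `ξ(v)` merges with `ξ(z)` into `ξ(z + v)`. On the other
side, the shift `(x, z) ↦ (x + v, z + v)` leaves `x − z` unchanged and turns `ξ(z)` into
`ξ(z + v)`, while `α_v ∘ α_{x+v}⁻¹ = α_x⁻¹` because `α` is multiplicative. Both sides are thus the
same sum `Σ_ξ ξ(z + v) α_x⁻¹(F(x − z, ξ))`.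
-/

theorem LinearEquiv.apply_symm_mul_apply {R M : Type*} [Semiring R] [AddCommMonoid M]
    [Module R M] (e f : M ≃ₗ[R] M) (a : M) : f ((e * f).symm a) = e.symm a := by
  rw [LinearEquiv.mul_eq_trans, LinearEquiv.symm_trans_apply, LinearEquiv.apply_symm_apply]

omit [Fintype G] in
theorem dualKernelTransform_doubleDualAct_apply (α : G → (A ≃ₗ[ℂ] A))
    (F : G → AddChar G ℂˣ → A) (v x z : G) :
    dualKernelTransform α (doubleDualAct v F) x z
      = ∑ ξ : AddChar G ℂˣ, ((ξ (z + v) : ℂˣ) : ℂ) • (α x).symm (F (x - z) ξ) := by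
  refine Finset.sum_congr rfl fun ξ _ => ?_
  rw [doubleDualAct, map_smul, smul_smul, AddChar.map_add_eq_mul, Units.val_mul]

omit [Fintype G] in
theorem map_dualKernelTransform_add_add (α : G → (A ≃ₗ[ℂ] A))
    (hα : ∀ x y : G, α (x + y) = α x * α y) (F : G → AddChar G ℂˣ → A) (v x z : G) :
    α v (dualKernelTransform α F (x + v) (z + v))
      = ∑ ξ : AddChar G ℂˣ, ((ξ (z + v) : ℂˣ) : ℂ) • (α x).symm (F (x - z) ξ) := by
  rw [dualKernelTransform, map_sum, add_sub_add_right_eq_sub]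
  refine Finset.sum_congr rfl fun ξ _ => ?_
  rw [map_smul, hα, LinearEquiv.apply_symm_mul_apply]

/-- Under the transform, the double dual action of `G` becomes the original action `α`
on `A` combined with the adjoint action of the right regular representation on kernels:
`(D_v F)~(x,z) = α_v( F̃(x+v, z+v) )`. -/
theorem dualKernelTransform_doubleDual (α : G → (A ≃ₗ[ℂ] A))
    (hα : ∀ x y : G, α (x + y) = α x * α y)
    (F : G → AddChar G ℂˣ → A) (v x z : G) :
    dualKernelTransform α (doubleDualAct v F) x z
      = α v (dualKernelTransform α F (x + v) (z + v)) := by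
  rw [dualKernelTransform_doubleDualAct_apply, map_dualKernelTransform_add_add α hα]
end

section
/- Let G be a multiplicative abelian group, B an associative unital ℂ-algebra, γ : G → Aut_ℂ(B) a map to algebra automorphisms that fix the center of B pointwise, φ : G × G × G → ℂˣ a map, and u₁, u₂ : G × G → Bˣ two families of units each satisfying, for j = 1, 2 and all λ, μ, ν ∈ G and b ∈ B: (i) γ_λ(γ_μ(b)) = u_j(λ,μ) · γ_{λμ}(b) · u_j(λ,μ)⁻¹, and (ii) φ(λ,μ,ν) · u_j(λ,μ) · u_j(λμ,ν) = γ_λ(u_j(μ,ν)) · u_j(λ,μν). Then σ(λ,μ) := u₁(λ,μ) · u₂(λ,μ)⁻¹ takes values in the center of B, and σ is an ordinary (untwisted) 2-cocycle: σ(λ,μ) · σ(λμ,ν) = σ(μ,ν) · σ(λ,μν) for all λ, μ, ν ∈ G. -/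
/-!
Condition (i) says that `u₁(λ,μ)` and `u₂(λ,μ)` induce the same inner automorphism of `B`, so
their quotient `σ(λ,μ)` is central. Writing `u₁ = σ u₂` in condition (ii) for `u₁`, the central
factors (which `γ` fixes) can be pulled to the front; comparing with condition (ii) for `u₂`
leaves `σ(λ,μ) σ(λμ,ν) w = σ(μ,ν) σ(λ,μν) w` with `w = γ_λ(u₂(μ,ν)) u₂(λ,μν)` a unit.
-/

theorem Units.val_mem_center_of_conj_eq_self {M : Type*} [Monoid M] {u : Mˣ}
    (h : ∀ x : M, u * x * ↑u⁻¹ = x) : (u : M) ∈ Set.center M :=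
  Semigroup.mem_center_iff.mpr fun x => ((Units.mul_inv_eq_iff_eq_mul u).mp (h x)).symm

theorem Units.val_mul_inv_mem_center_of_conj_eq {M : Type*} [Monoid M] {a c : Mˣ}
    (h : ∀ x : M, a * x * ↑a⁻¹ = c * x * ↑c⁻¹) : ((a * c⁻¹ : Mˣ) : M) ∈ Set.center M := by
  refine Units.val_mem_center_of_conj_eq_self fun x => ?_
  simpa [mul_assoc] using h (↑c⁻¹ * x * c)

section TwistedCocycle

variable {G R M F : Type*} [Mul G] [Monoid M] [SMul R M] [FunLike F M M]

def IsTwistedCocycle (γ : G → F) (φ : G → G → G → R) (u : G → G → Mˣ) : Prop :=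
  ∀ l m n : G, φ l m n • ((u l m : M) * u (l * m) n) = γ l (u m n) * u l (m * n)

theorem IsTwistedCocycle.cocycle_identity_of_eq_central_mul [SMulCommClass R M M]
    [MonoidHomClass F M M] {γ : G → F} {φ : G → G → G → R} {u₁ u₂ σ : G → G → Mˣ}
    (h₁ : IsTwistedCocycle γ φ u₁) (h₂ : IsTwistedCocycle γ φ u₂)
    (hσ : ∀ l m, u₁ l m = σ l m * u₂ l m) (hσc : ∀ l m, (σ l m : M) ∈ Set.center M)
    (hγσ : ∀ g l m, γ g (σ l m) = σ l m) (l m n : G) :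
    σ l m * σ (l * m) n = σ m n * σ l (m * n) := by
  have hcomm : ∀ l m x, Commute x (σ l m : M) := fun l m x =>
    Semigroup.mem_center_iff.mp (hσc l m) x
  set w : M := γ l (u₂ m n) * u₂ l (m * n)
  have hw : IsUnit w := ((u₂ m n).isUnit.map (γ l)).mul (u₂ l (m * n)).isUnit
  apply Units.ext
  rw [Units.val_mul, Units.val_mul, ← hw.mul_left_inj]
  calc (σ l m : M) * σ (l * m) n * w
      = σ l m * σ (l * m) n * (φ l m n • ((u₂ l m : M) * u₂ (l * m) n)) := by rw [h₂]
    _ = φ l m n • ((u₁ l m : M) * u₁ (l * m) n) := by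
        rw [mul_smul_comm, ← (hcomm _ _ _).mul_mul_mul_comm, hσ, hσ, Units.val_mul,
          Units.val_mul]
    _ = γ l (u₁ m n) * u₁ l (m * n) := h₁ l m n
    _ = σ m n * σ l (m * n) * w := by
        rw [hσ, hσ, Units.val_mul, Units.val_mul, map_mul, hγσ,
          (hcomm _ _ _).mul_mul_mul_comm]

end TwistedCocycle

/-- If two multipliers `u₁, u₂` implement the same twisted action `γ` (fixing the center
of `B` pointwise) with the same associator `φ`, then `σ(λ,μ) = u₁(λ,μ) u₂(λ,μ)⁻¹` is
central and is an ordinary (untwisted) 2-cocycle. -/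
theorem multiplier_difference_central_cocycle {G : Type*} [CommGroup G]
    {B : Type*} [Ring B] [Algebra ℂ B]
    (γ : G → (B ≃ₐ[ℂ] B)) (hγc : ∀ g : G, ∀ b ∈ Set.center B, γ g b = b)
    (φ : G → G → G → ℂˣ) (u₁ u₂ : G → G → Bˣ)
    (h₁ad : ∀ (l m : G) (b : B),
      γ l (γ m b) = (u₁ l m : B) * γ (l * m) b * ((u₁ l m)⁻¹ : Bˣ))
    (h₂ad : ∀ (l m : G) (b : B),
      γ l (γ m b) = (u₂ l m : B) * γ (l * m) b * ((u₂ l m)⁻¹ : Bˣ))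
    (h₁coc : ∀ l m n : G, ((φ l m n : ℂˣ) : ℂ) • ((u₁ l m : B) * (u₁ (l * m) n : B))
      = γ l (u₁ m n) * (u₁ l (m * n) : B))
    (h₂coc : ∀ l m n : G, ((φ l m n : ℂˣ) : ℂ) • ((u₂ l m : B) * (u₂ (l * m) n : B))
      = γ l (u₂ m n) * (u₂ l (m * n) : B)) :
    (∀ l m : G, ((u₁ l m * (u₂ l m)⁻¹ : Bˣ) : B) ∈ Set.center B) ∧
    (∀ l m n : G,
      (u₁ l m * (u₂ l m)⁻¹) * (u₁ (l * m) n * (u₂ (l * m) n)⁻¹)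
        = (u₁ m n * (u₂ m n)⁻¹) * (u₁ l (m * n) * (u₂ l (m * n))⁻¹)) := by
  have hcenter : ∀ l m : G, ((u₁ l m * (u₂ l m)⁻¹ : Bˣ) : B) ∈ Set.center B :=
    fun l m => Units.val_mul_inv_mem_center_of_conj_eq fun x => by
      simpa using (h₁ad l m ((γ (l * m)).symm x)).symm.trans (h₂ad l m _)
  refine ⟨hcenter, ?_⟩
  exact IsTwistedCocycle.cocycle_identity_of_eq_central_mul (γ := γ)
    (φ := fun l m n => (φ l m n : ℂ)) h₁coc h₂coc
    (fun l m => (inv_mul_cancel_right _ _).symm) hcenter (fun g l m => hγc g _ (hcenter l m))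
end

section
/- On V = Fin 3 → ZMod 2 define u(a,b) = (−1)^{e(a,b)} ∈ ℝ, where e(a,b) ∈ ℕ is the lift (via ZMod.val) of a₀b₁ + a₀b₂ + a₁b₂ + a₀a₁b₂ + a₂a₀b₁ + a₁a₂b₀ ∈ ZMod 2. On the 8-dimensional real vector space of functions f : V → ℝ define the twisted convolution (f ∗ g)(c) = Σ_{a∈V} u(a, c−a) f(a) g(c−a). Then for the standard basis vectors δ_a (the indicator function of a) one has, for all a, b, c ∈ V: (δ_a ∗ δ_b) ∗ δ_c = (−1)^{T(a,b,c).val} • ( δ_a ∗ (δ_b ∗ δ_c) ), where T(a,b,c) = a₀(b₁c₂ + b₂c₁) + a₁(b₂c₀ + b₀c₂) + a₂(b₀c₁ + b₁c₀) ∈ ZMod 2. -/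
/-- The octonionic twisting 2-cochain on `ℤ₂³`:
`u(a,b) = (−1)^{a₀b₁ + a₀b₂ + a₁b₂ + a₀a₁b₂ + a₂a₀b₁ + a₁a₂b₀}`. -/
noncomputable def octCochain (a b : Fin 3 → ZMod 2) : ℝ :=
  (-1 : ℝ) ^ (a 0 * b 1 + a 0 * b 2 + a 1 * b 2
      + a 0 * a 1 * b 2 + a 2 * a 0 * b 1 + a 1 * a 2 * b 0 : ZMod 2).val

/-- The scalar triple product `a · (b × c)` on `ℤ₂³`. -/
def tripleProd (a b c : Fin 3 → ZMod 2) : ZMod 2 :=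
  a 0 * (b 1 * c 2 + b 2 * c 1) + a 1 * (b 2 * c 0 + b 0 * c 2)
    + a 2 * (b 0 * c 1 + b 1 * c 0)

/-- The twisted convolution `(f ∗ g)(c) = Σ_a u(a, c−a) f(a) g(c−a)` on real-valued
functions on `ℤ₂³` (the octonions as a twisted group algebra). -/
noncomputable def octConv (f g : (Fin 3 → ZMod 2) → ℝ) : (Fin 3 → ZMod 2) → ℝ :=
  fun c => ∑ a : Fin 3 → ZMod 2, octCochain a (c - a) * f a * g (c - a)

/-- The standard basis vector `δ_a`, the indicator function of `a`. -/
def octDelta (a : Fin 3 → ZMod 2) : (Fin 3 → ZMod 2) → ℝ :=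
  fun x => if x = a then 1 else 0

/-!
On basis vectors the twisted convolution reads `δ_a ∗ δ_b = u(a,b) δ_{a+b}`, so the two
bracketings of `δ_a ∗ δ_b ∗ δ_c` are multiples of `δ_{a+b+c}` by `u(a,b) u(a+b,c)` and
`u(b,c) u(a,b+c)`. Their ratio is the coboundary of `u`, and for the octonionic cochain the
exponents differ by the polynomial identity `∂e(a,b,c) = a · (b × c)` over `ZMod 2`.
-/

section TwistedConv

variable {G R : Type*} [AddCommGroup G] [Fintype G] [DecidableEq G] [CommSemiring R]

def twistedConv (u : G → G → R) (f g : G → R) : G → R :=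
  fun c => ∑ a, u a (c - a) * f a * g (c - a)

theorem twistedConv_single_single (u : G → G → R) (a b : G) (r s : R) :
    twistedConv u (Pi.single a r) (Pi.single b s) = Pi.single (a + b) (u a b * r * s) := by
  ext c
  rw [twistedConv, Finset.sum_eq_single a (fun x _ hx => by simp [hx]) (by simp)]
  by_cases h : c = a + b
  · simp [h]
  · have h' : c - a ≠ b := by rwa [Ne, sub_eq_iff_eq_add']
    simp [h, h']

theorem twistedConv_single_assoc_of_mul_eq (u : G → G → R) {a b c : G} {φ : R}
    (h : u a b * u (a + b) c = φ * (u b c * u a (b + c))) :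
    twistedConv u (twistedConv u (Pi.single a 1) (Pi.single b 1)) (Pi.single c 1) =
      φ • twistedConv u (Pi.single a 1) (twistedConv u (Pi.single b 1) (Pi.single c 1)) := by
  simp only [twistedConv_single_single, ← Pi.single_smul', add_assoc, mul_one, smul_eq_mul]
  rw [mul_comm, h, mul_comm (u b c)]

end TwistedConv

theorem octConv_eq_twistedConv : octConv = twistedConv octCochain := rfl

theorem octDelta_eq_single (a : Fin 3 → ZMod 2) : octDelta a = Pi.single a 1 := by
  ext x
  simp [octDelta, Pi.single_apply]

theorem neg_one_pow_val_add {R : Type*} [Ring R] (x y : ZMod 2) :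
    (-1 : R) ^ (x + y).val = (-1) ^ x.val * (-1) ^ y.val := by
  rw [ZMod.val_add, ← neg_one_pow_eq_pow_mod_two, pow_add]

theorem octCochain_mul_octCochain (a b c : Fin 3 → ZMod 2) :
    octCochain a b * octCochain (a + b) c =
      (-1) ^ (tripleProd a b c).val * (octCochain b c * octCochain a (b + c)) := by
  simp only [octCochain, ← neg_one_pow_val_add]
  congr 2
  simp only [tripleProd, Pi.add_apply]
  ring

/-- On basis vectors, the twisted convolution algebra of `ℤ₂³` (the octonions) has
associator `(−1)^{a·(b×c)}`:
`(δ_a ∗ δ_b) ∗ δ_c = (−1)^{a·(b×c)} • (δ_a ∗ (δ_b ∗ δ_c))`. -/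
theorem octConv_delta_associator (a b c : Fin 3 → ZMod 2) :
    octConv (octConv (octDelta a) (octDelta b)) (octDelta c)
      = ((-1 : ℝ) ^ (tripleProd a b c).val) •
          octConv (octDelta a) (octConv (octDelta b) (octDelta c)) := by
  simp only [octConv_eq_twistedConv, octDelta_eq_single]
  exact twistedConv_single_assoc_of_mul_eq octCochain (octCochain_mul_octCochain a b c)
end
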